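/- Let q be a prime power, s ≥ 1, and let C^(1), ..., C^(s) ∈ F_q^{ℕ×ℕ₀} be finite-row generating matrices whose digital sequence (via the digital method with index sequence s_n = n) is uniformly distributed in [0,1]^s. Let (s_n)_{n≥0} be a uniformly distributed sequence in Z_q. Then the sequence (x_n)_{n≥0} in [0,1]^s produced by the digital method applied to the q-adic digits of s_n is uniformly distributed in [0,1]^s. -/

import Mathlib

/-!
By the finite-row property, the first `D` digits of every coordinate of `x_n` depend only on
`s_n mod q^K` for some `K = K(D)`, and they pin `x_n` down to a closed `q`-adic cell of side
`q^{-D}`. So, up to the cells touching the boundary of a given elementary interval, the frequency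
of hits of that interval is a frequency of residue classes mod `q^K`, which is the same for
`(s_n)` as for `(n)`, both being uniformly distributed in `Z_q`. A single cell has density at
most `2 q^{-D}` by uniform distribution of the sequence for `s_n = n` (a closed cell is covered by
two half-open ones and the point `1`, which lies outside `[0,1)`), and `D` is arbitrary.
-/

def Zb (b : ℕ) : Subring (∀ k : ℕ, ZMod (b ^ k)) where
  carrier := {x | ∀ k, ZMod.castHom (pow_dvd_pow b (Nat.le_succ k)) (ZMod (b ^ k)) (x (k + 1)) = x k}
  zero_mem' := fun k => map_zero _
  one_mem' := fun k => map_one _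
  add_mem' := fun hx hy k => by rw [Pi.add_apply, map_add, hx k, hy k]; rfl
  mul_mem' := fun hx hy k => by rw [Pi.mul_apply, map_mul, hx k, hy k]; rfl
  neg_mem' := fun hx k => by rw [Pi.neg_apply, map_neg, hx k]; rfl

def natToZb (b : ℕ) (n : ℕ) : ↥(Zb b) := ⟨fun k => (n : ZMod (b ^ k)), fun k => map_natCast _ n⟩

def UDZb (b : ℕ) (x : ℕ → ↥(Zb b)) : Prop :=
  ∀ k : ℕ, 1 ≤ k → ∀ a : ZMod (b ^ k),
    Filter.Tendsto
      (fun N => (((Finset.range N).filter (fun n => (x n).1 k = a)).card : ℝ) / N)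
      Filter.atTop (nhds (1 / (b : ℝ) ^ k))

/-- The `r`-th `b`-adic digit of a `q`-adic integer `x`, as an element of `Fin q`. -/
def zbDigitF (q : ℕ) (hq : 0 < q) (x : ↥(Zb q)) (r : ℕ) : Fin q :=
  ⟨(x.1 (r + 1)).val / q ^ r % q, Nat.mod_lt _ hq⟩

/-- The `i`-th coordinate of the point produced by the digital method (Algorithm 2) from the
`q`-adic digits of `x`, using generating matrices `c` (rows indexed from `1`), bijections
`ψ r : {0,…,q-1} → F_q` and `Λ i j : F_q → {0,…,q-1}`. -/
noncomputable def digPoint {F : Type} [Field F] (q : ℕ) (hq : 0 < q) (s : ℕ)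
    (c : Fin s → ℕ → ℕ → F) (ψ : ℕ → Fin q ≃ F) (Λ : Fin s → ℕ → F ≃ Fin q)
    (x : ↥(Zb q)) (i : Fin s) : ℝ :=
  ∑' j : ℕ,
    (((Λ i (j + 1)) (∑ᶠ r : ℕ, c i (j + 1) r * ψ r (zbDigitF q hq x r)) : Fin q) : ℝ)
      / (q : ℝ) ^ (j + 1)

open Classical in
/-- Uniform distribution in the cube, tested on elementary `q`-adic intervals: every interval
`Π_i [a_i/q^{d_i}, (a_i+1)/q^{d_i})` receives its fair asymptotic proportion of points. -/
def UDCube (q s : ℕ) (x : ℕ → Fin s → ℝ) : Prop :=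
  ∀ d : Fin s → ℕ, ∀ a : Fin s → ℕ, (∀ i, a i < q ^ d i) →
    Filter.Tendsto
      (fun N => (((Finset.range N).filter
        (fun n => ∀ i, (a i : ℝ) / (q : ℝ) ^ d i ≤ x n i
          ∧ x n i < ((a i : ℝ) + 1) / (q : ℝ) ^ d i)).card : ℝ) / N)
      Filter.atTop (nhds (∏ i, 1 / (q : ℝ) ^ d i))

open Filter Finset Topology

noncomputable def freq (p : ℕ → Prop) [DecidablePred p] (N : ℕ) : ℝ :=
  #{n ∈ range N | p n} / N

section Frequency

variable {p p' : ℕ → Prop} [DecidablePred p] [DecidablePred p']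

lemma freq_mono (h : ∀ n, p n → p' n) (N : ℕ) : freq p N ≤ freq p' N := by
  unfold freq
  gcongr with n
  exact h n

lemma freq_or_le (N : ℕ) : freq (fun n => p n ∨ p' n) N ≤ freq p N + freq p' N := by
  rw [freq, freq, freq, ← add_div, filter_or]
  gcongr
  exact_mod_cast card_union_le _ _

lemma freq_not_le (N : ℕ) : freq (fun n => ¬ p n) N ≤ 1 - freq p N := by
  rcases N.eq_zero_or_pos with rfl | hN
  · simp [freq]
  have hcard := card_filter_add_card_filter_not (s := range N) p
  rw [card_range] at hcard
  rw [freq, freq, le_sub_iff_add_le, ← add_div, div_le_one (by positivity)]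
  exact_mod_cast (add_comm _ _).trans_le hcard.le

lemma tendsto_freq_mod_eq {M r : ℕ} (hM : 0 < M) (hr : r < M) :
    Tendsto (freq (· % M = r)) atTop (𝓝 (1 / M)) := by
  have hcount (N : ℕ) : M * #{n ∈ range N | n % M = r} ≤ N + M ∧
      N < M * #{n ∈ range N | n % M = r} + M := by
    have h := Nat.count_modEq_card (r := M) N hM r
    simp only [Nat.ModEq, Nat.mod_eq_of_lt hr, Nat.count_eq_card_filter_range] at h
    rw [h, mul_add]
    have hdiv := Nat.div_add_mod N M
    have := Nat.mod_lt N hM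
    generalize M * (N / M) = t at hdiv
    split_ifs <;> omega
  have hM' : (0 : ℝ) < M := by exact_mod_cast hM
  have hlo : Tendsto (fun N : ℕ => 1 / (M : ℝ) - 1 / N) atTop (𝓝 (1 / M)) := by
    simpa using (tendsto_const_nhds (x := 1 / (M : ℝ))).sub tendsto_one_div_atTop_nhds_zero_nat
  have hhi : Tendsto (fun N : ℕ => 1 / (M : ℝ) + 1 / N) atTop (𝓝 (1 / M)) := by
    simpa using (tendsto_const_nhds (x := 1 / (M : ℝ))).add tendsto_one_div_atTop_nhds_zero_nat
  refine tendsto_of_tendsto_of_tendsto_of_le_of_le' hlo hhi ?_ ?_ <;>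
    filter_upwards [eventually_gt_atTop 0] with N hN <;>
    have hN' : (0 : ℝ) < N := by exact_mod_cast hN
  · have : (N : ℝ) < M * #{n ∈ range N | n % M = r} + M := by exact_mod_cast (hcount N).2
    rw [freq, div_sub_div _ _ hM'.ne' hN'.ne', div_le_div_iff₀ (by positivity) hN']
    nlinarith
  · have : (M : ℝ) * #{n ∈ range N | n % M = r} ≤ N + M := by exact_mod_cast (hcount N).1
    rw [freq, div_add_div _ _ hM'.ne' hN'.ne', div_le_div_iff₀ hN' (by positivity)]
    nlinarith

end Frequency

lemma tendsto_of_forall_sandwich {α : Type*} {l : Filter α} {u : α → ℝ} {v : ℝ}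
    (h : ∀ δ > 0, ∃ (lo hi : α → ℝ) (m M : ℝ), Tendsto lo l (𝓝 m) ∧ Tendsto hi l (𝓝 M) ∧
      (∀ a, lo a ≤ u a ∧ u a ≤ hi a) ∧ v - δ ≤ m ∧ M ≤ v + δ) :
    Tendsto u l (𝓝 v) := by
  refine tendsto_order.2 ⟨fun b hb => ?_, fun b hb => ?_⟩
  · obtain ⟨lo, _, m, _, hlo, _, hu, hm, _⟩ := h ((v - b) / 2) (by linarith)
    filter_upwards [hlo.eventually (lt_mem_nhds (show b < m by linarith))] with a ha
    exact ha.trans_le (hu a).1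
  · obtain ⟨_, hi, _, M, _, hhi, hu, _, hM⟩ := h ((b - v) / 2) (by linarith)
    filter_upwards [hhi.eventually (gt_mem_nhds (show M < b by linarith))] with a ha
    exact (hu a).2.trans_lt ha

section Zb

variable {q : ℕ}

lemma Zb.val_apply_eq_mod [NeZero q] (x : Zb q) {k l : ℕ} (h : k ≤ l) :
    (x.1 k).val = (x.1 l).val % q ^ k := by
  induction l, h using Nat.le_induction with
  | base => exact (Nat.mod_eq_of_lt (ZMod.val_lt _)).symm
  | succ l hkl ih =>
    have hstep : (x.1 l).val = (x.1 (l + 1)).val % q ^ l := by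
      rw [← x.2 l, ZMod.castHom_apply, ZMod.cast_eq_val, ZMod.val_natCast]
    rw [ih, hstep, Nat.mod_mod_of_dvd _ (pow_dvd_pow q hkl)]

lemma zbDigitF_natToZb_val (hq : 0 < q) (x : Zb q) {r K : ℕ} (h : r < K) :
    zbDigitF q hq (natToZb q (x.1 K).val) r = zbDigitF q hq x r := by
  have : NeZero q := ⟨hq.ne'⟩
  simp only [zbDigitF, natToZb, ZMod.val_natCast, ← Zb.val_apply_eq_mod x h]

lemma natToZb_apply_eq_iff [NeZero q] (n k : ℕ) (a : ZMod (q ^ k)) :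
    (natToZb q n).1 k = a ↔ n % q ^ k = a.val := by
  rw [← ZMod.val_injective _ |>.eq_iff]
  exact iff_of_eq (congrArg (· = _) (ZMod.val_natCast _ n))

lemma udZb_natToZb [NeZero q] : UDZb q (natToZb q) := by
  intro k _ a
  have h := tendsto_freq_mod_eq (M := q ^ k) (Nat.pos_of_neZero _) (ZMod.val_lt a)
  push_cast at h
  convert h using 2 with N
  simp only [freq, natToZb_apply_eq_iff]

lemma UDZb.tendsto_freq_residue [NeZero q] {x : ℕ → Zb q} (hx : UDZb q x) {K : ℕ} (hK : 1 ≤ K)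
    (P : ZMod (q ^ K) → Prop) [DecidablePred P] :
    Tendsto (freq fun n => P ((x n).1 K)) atTop (𝓝 (#{ρ | P ρ} / (q : ℝ) ^ K)) := by
  have hsplit (N : ℕ) :
      freq (fun n => P ((x n).1 K)) N = ∑ ρ with P ρ, freq (fun n => (x n).1 K = ρ) N := by
    simp only [freq, ← sum_div]
    congr 1
    norm_cast
    rw [card_eq_sum_card_fiberwise (f := fun n => (x n).1 K) (t := {ρ | P ρ})]
    · refine sum_congr rfl fun ρ hρ => ?_
      rw [filter_filter]
      refine congrArg card (filter_congr fun n _ => and_iff_right_of_imp fun h => ?_)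
      exact h ▸ (mem_filter.1 hρ).2
    · exact fun n hn => mem_filter.2 ⟨mem_univ _, (mem_filter.1 hn).2⟩
  have h := tendsto_finsetSum {ρ | P ρ} fun ρ _ => hx K hK ρ
  rw [sum_const, nsmul_eq_mul, mul_one_div] at h
  exact h.congr fun N => (hsplit N).symm

end Zb

section Cube

variable {q s : ℕ}

-- An `abbrev`, so that decidability instances agree with those in `UDCube`.
abbrev InBox (q : ℕ) (d a : Fin s → ℕ) (p : Fin s → ℝ) : Prop :=
  ∀ i, (a i : ℝ) / (q : ℝ) ^ d i ≤ p i ∧ p i < ((a i : ℝ) + 1) / (q : ℝ) ^ d i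

lemma inBox_single_of_inBox_zero {p : Fin s → ℝ} (h0 : InBox q 0 0 p) {i : Fin s} {D w : ℕ}
    (hw : (w : ℝ) / (q : ℝ) ^ D ≤ p i ∧ p i < ((w : ℝ) + 1) / (q : ℝ) ^ D) :
    InBox q (Pi.single i D) (Pi.single i w) p := by
  intro j
  by_cases hj : j = i
  · subst hj
    simpa using hw
  · simpa [hj] using h0 j

lemma prod_one_div_pow_single (i : Fin s) (D : ℕ) :
    ∏ j, 1 / (q : ℝ) ^ (Pi.single i D : Fin s → ℕ) j = 1 / (q : ℝ) ^ D := by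
  rw [Fintype.prod_eq_single i fun j hj => by simp [hj]]
  simp

lemma div_pow_eq_mul_pow_sub_div {d D : ℕ} (hq : q ≠ 0) (hdD : d ≤ D) (a : ℕ) :
    (a : ℝ) / (q : ℝ) ^ d = ((a * q ^ (D - d) : ℕ) : ℝ) / (q : ℝ) ^ D := by
  rw [Nat.cast_mul, Nat.cast_pow, ← Nat.sub_add_cancel hdD, pow_add, Nat.add_sub_cancel,
    mul_comm ((q : ℝ) ^ (D - d)), mul_div_mul_right _ _ (by positivity)]

lemma mem_Ico_of_cell {d D a g : ℕ} {t : ℝ} (hq : q ≠ 0) (hdD : d ≤ D)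
    (ht : (g : ℝ) / (q : ℝ) ^ D ≤ t ∧ t ≤ ((g : ℝ) + 1) / (q : ℝ) ^ D)
    (hlo : a * q ^ (D - d) ≤ g) (hhi : g + 2 ≤ (a + 1) * q ^ (D - d)) :
    (a : ℝ) / (q : ℝ) ^ d ≤ t ∧ t < ((a : ℝ) + 1) / (q : ℝ) ^ d := by
  have hqD : (0 : ℝ) < (q : ℝ) ^ D := by positivity
  rw [div_pow_eq_mul_pow_sub_div hq hdD, ← Nat.cast_add_one,
    div_pow_eq_mul_pow_sub_div hq hdD (a + 1)]
  constructor
  · exact (div_le_div_of_nonneg_right (by exact_mod_cast hlo) hqD.le).trans ht.1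
  · refine ht.2.trans_lt (div_lt_div_of_pos_right ?_ hqD)
    exact_mod_cast (show g + 1 < (a + 1) * q ^ (D - d) by omega)

lemma cell_le_of_mem_Ico {d D a g : ℕ} {t : ℝ} (hq : q ≠ 0) (hdD : d ≤ D)
    (ht : (g : ℝ) / (q : ℝ) ^ D ≤ t ∧ t ≤ ((g : ℝ) + 1) / (q : ℝ) ^ D)
    (h : (a : ℝ) / (q : ℝ) ^ d ≤ t ∧ t < ((a : ℝ) + 1) / (q : ℝ) ^ d) :
    a * q ^ (D - d) ≤ g + 1 ∧ g + 1 ≤ (a + 1) * q ^ (D - d) := by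
  have hqD : (0 : ℝ) < (q : ℝ) ^ D := by positivity
  rw [div_pow_eq_mul_pow_sub_div hq hdD, ← Nat.cast_add_one,
    div_pow_eq_mul_pow_sub_div hq hdD (a + 1)] at h
  constructor
  · have := (div_le_div_iff_of_pos_right hqD).1 (h.1.trans ht.2)
    exact_mod_cast this
  · have := (div_lt_div_iff_of_pos_right hqD).1 (ht.1.trans_lt h.2)
    exact_mod_cast this

/-- `G ρ i` is the index of a depth-`D` `q`-adic cell containing `f x i`, read off from
`x mod q^K`. Cells are closed: a digit expansion may end in a tail of `q - 1`s. -/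
def IsResidueCellMap (f : Zb q → Fin s → ℝ) (D K : ℕ) (G : ZMod (q ^ K) → Fin s → ℕ) : Prop :=
  ∀ x i, G (x.1 K) i < q ^ D ∧ (G (x.1 K) i : ℝ) / (q : ℝ) ^ D ≤ f x i ∧
    f x i ≤ ((G (x.1 K) i : ℝ) + 1) / (q : ℝ) ^ D

lemma UDCube.tendsto_freq {y : ℕ → Fin s → ℝ} (hy : UDCube q s y) {d a : Fin s → ℕ}
    (ha : ∀ i, a i < q ^ d i) :
    Tendsto (freq fun n => InBox q d a (y n)) atTop (𝓝 (∏ i, 1 / (q : ℝ) ^ d i)) :=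
  hy d a ha

lemma IsResidueCellMap.lt_pow [NeZero q] {f : Zb q → Fin s → ℝ} {D K : ℕ}
    {G : ZMod (q ^ K) → Fin s → ℕ} (hG : IsResidueCellMap f D K G) (ρ : ZMod (q ^ K))
    (i : Fin s) : G ρ i < q ^ D := by
  simpa [natToZb, ZMod.natCast_zmod_val] using (hG (natToZb q ρ.val) i).1

lemma IsResidueCellMap.card_fiber_div_le [NeZero q] {f : Zb q → Fin s → ℝ} {D K : ℕ}
    {G : ZMod (q ^ K) → Fin s → ℕ} (hG : IsResidueCellMap f D K G) (hK : 1 ≤ K)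
    (hnat : UDCube q s fun n => f (natToZb q n)) (i : Fin s) (w : ℕ) :
    (#{ρ | G ρ i = w} : ℝ) / (q : ℝ) ^ K ≤ 2 / (q : ℝ) ^ D := by
  rcases le_or_gt (q ^ D) w with hw | hw
  · rw [filter_false_of_mem fun ρ _ => ((hG.lt_pow ρ i).trans_le hw).ne]
    simp only [card_empty, Nat.cast_zero, zero_div]
    positivity
  have hqD : (0 : ℝ) < (q : ℝ) ^ D := pow_pos (Nat.cast_pos.2 (NeZero.pos q)) D
  -- `w'` is `w + 1` except for the top cell, whose closure only adds the point `1 ∉ [0, 1)`.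
  set w' := min (w + 1) (q ^ D - 1)
  have hw' : w' < q ^ D := by omega
  have hcover (n : ℕ) (hn : G ((natToZb q n).1 K) i = w) :
      InBox q (Pi.single i D) (Pi.single i w) (f (natToZb q n)) ∨
      InBox q (Pi.single i D) (Pi.single i w') (f (natToZb q n)) ∨
      ¬ InBox q 0 0 (f (natToZb q n)) := by
    obtain ⟨-, hlo, hhi⟩ := hG (natToZb q n) i
    rw [hn] at hlo hhi
    by_cases h0 : InBox q 0 0 (f (natToZb q n))
    · rcases hhi.lt_or_eq with hlt | heq
      · exact Or.inl (inBox_single_of_inBox_zero h0 ⟨hlo, hlt⟩)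
      have htop : w + 1 < q ^ D := by
        have h1 : f (natToZb q n) i < 1 := by simpa using (h0 i).2
        rw [heq, div_lt_one hqD] at h1
        exact_mod_cast h1
      refine Or.inr (Or.inl (inBox_single_of_inBox_zero h0 ?_))
      rw [show w' = w + 1 by omega, heq]
      push_cast
      exact ⟨le_rfl, div_lt_div_of_pos_right (by linarith) hqD⟩
    · exact Or.inr (Or.inr h0)
  have hbox (a : ℕ) (ha : a < q ^ D) :=
    hnat.tendsto_freq (d := Pi.single i D) (a := Pi.single i a) fun j => by
      by_cases hj : j = i
      · subst hj
        simpa using ha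
      · simp [hj]
  have hle := le_of_tendsto_of_tendsto'
    (udZb_natToZb.tendsto_freq_residue hK fun ρ => G ρ i = w)
    ((hbox w hw).add ((hbox w' hw').add
      (tendsto_const_nhds.sub (hnat.tendsto_freq (d := 0) (a := 0) fun j => by simp))))
    fun N => (freq_mono hcover N).trans ((freq_or_le N).trans
      (add_le_add le_rfl ((freq_or_le N).trans (add_le_add le_rfl (freq_not_le N)))))
  simp only [prod_one_div_pow_single, Pi.zero_apply, pow_zero, div_one, prod_const_one] at hle
  rwa [sub_self, add_zero, ← add_div, one_add_one_eq_two] at hle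

lemma card_filter_le_card_filter_add_sum {α ι : Type*} [Fintype α] [Fintype ι]
    {P Q : α → Prop} {R : ι → α → Prop} [DecidablePred P] [DecidablePred Q]
    [∀ i, DecidablePred (R i)] (h : ∀ x, P x → Q x ∨ ∃ i, R i x) :
    #{x | P x} ≤ #{x | Q x} + ∑ i, #{x | R i x} := by
  classical
  calc #{x | P x} ≤ #(({x | Q x} : Finset α) ∪ univ.biUnion fun i => {x | R i x}) :=
        card_le_card fun x hx => by simpa using h x (by simpa using hx)
    _ ≤ _ := (card_union_le _ _).trans (add_le_add le_rfl card_biUnion_le)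

lemma IsResidueCellMap.card_div_le_card_div_add [NeZero q] {f : Zb q → Fin s → ℝ} {D K : ℕ}
    {G : ZMod (q ^ K) → Fin s → ℕ} (hG : IsResidueCellMap f D K G) (hK : 1 ≤ K)
    (hnat : UDCube q s fun n => f (natToZb q n)) (A B : Fin s → ℕ) :
    (#{ρ | ∀ i, A i ≤ G ρ i + 1 ∧ G ρ i + 1 ≤ B i} : ℝ) / (q : ℝ) ^ K ≤
      #{ρ | ∀ i, A i ≤ G ρ i ∧ G ρ i + 2 ≤ B i} / (q : ℝ) ^ K + 4 * s / (q : ℝ) ^ D := by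
  have hcover (ρ : ZMod (q ^ K)) (hρ : ∀ i, A i ≤ G ρ i + 1 ∧ G ρ i + 1 ≤ B i) :
      (∀ i, A i ≤ G ρ i ∧ G ρ i + 2 ≤ B i) ∨ ∃ i, G ρ i = A i - 1 ∨ G ρ i = B i - 1 := by
    by_cases hin : ∀ i, A i ≤ G ρ i ∧ G ρ i + 2 ≤ B i
    · exact Or.inl hin
    obtain ⟨i, hi⟩ := not_forall.1 hin
    have := hρ i
    exact Or.inr ⟨i, by omega⟩
  have hfiber (i : Fin s) :
      (#{ρ | G ρ i = A i - 1 ∨ G ρ i = B i - 1} : ℝ) / (q : ℝ) ^ K ≤ 4 / (q : ℝ) ^ D := by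
    have hunion : (#{ρ | G ρ i = A i - 1 ∨ G ρ i = B i - 1} : ℝ) ≤
        #{ρ | G ρ i = A i - 1} + #{ρ | G ρ i = B i - 1} := by
      rw [filter_or]
      exact_mod_cast card_union_le _ _
    calc _ ≤ (#{ρ | G ρ i = A i - 1} + #{ρ | G ρ i = B i - 1} : ℝ) / (q : ℝ) ^ K := by gcongr
      _ ≤ 2 / (q : ℝ) ^ D + 2 / (q : ℝ) ^ D := by
          rw [add_div]
          exact add_le_add (hG.card_fiber_div_le hK hnat i _) (hG.card_fiber_div_le hK hnat i _)
      _ = 4 / (q : ℝ) ^ D := by ring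
  calc (#{ρ | ∀ i, A i ≤ G ρ i + 1 ∧ G ρ i + 1 ≤ B i} : ℝ) / (q : ℝ) ^ K
      ≤ (#{ρ | ∀ i, A i ≤ G ρ i ∧ G ρ i + 2 ≤ B i} +
          ∑ i, #{ρ | G ρ i = A i - 1 ∨ G ρ i = B i - 1} : ℝ) / (q : ℝ) ^ K := by
        gcongr
        exact_mod_cast card_filter_le_card_filter_add_sum hcover
    _ ≤ #{ρ | ∀ i, A i ≤ G ρ i ∧ G ρ i + 2 ≤ B i} / (q : ℝ) ^ K +
          ∑ _i : Fin s, 4 / (q : ℝ) ^ D := by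
        push_cast
        rw [add_div, sum_div]
        exact add_le_add le_rfl (sum_le_sum fun i _ => hfiber i)
    _ = _ := by
        rw [sum_const, card_univ, Fintype.card_fin, nsmul_eq_mul]
        ring

theorem UDCube.comp_of_udZb (hq : 1 < q) {f : Zb q → Fin s → ℝ}
    (hf : ∀ D, ∃ K, 1 ≤ K ∧ ∃ G, IsResidueCellMap f D K G)
    (hnat : UDCube q s fun n => f (natToZb q n)) {x : ℕ → Zb q} (hx : UDZb q x) :
    UDCube q s fun n => f (x n) := by
  have : NeZero q := ⟨by omega⟩
  intro d a ha
  refine tendsto_of_forall_sandwich fun δ hδ => ?_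
  obtain ⟨D, hdD, hD⟩ : ∃ D, ∑ i, d i ≤ D ∧ 4 * s / (q : ℝ) ^ D ≤ δ :=
    ((eventually_ge_atTop _).and ((tendsto_const_nhds.div_atTop
      (tendsto_pow_atTop_atTop_of_one_lt (by exact_mod_cast hq))).eventually
        (ge_mem_nhds hδ))).exists
  replace hdD (i : Fin s) : d i ≤ D :=
    (single_le_sum (fun j _ => Nat.zero_le (d j)) (mem_univ i)).trans hdD
  obtain ⟨K, hK, G, hG⟩ := hf D
  -- In units of `q^{-D}`, the `i`-th side of the box is `[A i, B i)`.
  let A (i : Fin s) : ℕ := a i * q ^ (D - d i)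
  let B (i : Fin s) : ℕ := (a i + 1) * q ^ (D - d i)
  have hinner (y : Zb q) (hy : ∀ i, A i ≤ G (y.1 K) i ∧ G (y.1 K) i + 2 ≤ B i) :
      InBox q d a (f y) := fun i =>
    mem_Ico_of_cell (NeZero.ne q) (hdD i) (hG y i).2 (hy i).1 (hy i).2
  have houter (y : Zb q) (hy : InBox q d a (f y)) :
      ∀ i, A i ≤ G (y.1 K) i + 1 ∧ G (y.1 K) i + 1 ≤ B i := fun i =>
    cell_le_of_mem_Ico (NeZero.ne q) (hdD i) (hG y i).2 (hy i)
  have hinner_le := le_of_tendsto_of_tendsto'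
    (udZb_natToZb.tendsto_freq_residue hK fun ρ => ∀ i, A i ≤ G ρ i ∧ G ρ i + 2 ≤ B i)
    (hnat.tendsto_freq ha) (freq_mono fun n => hinner _)
  have le_outer := le_of_tendsto_of_tendsto' (hnat.tendsto_freq ha)
    (udZb_natToZb.tendsto_freq_residue hK fun ρ => ∀ i, A i ≤ G ρ i + 1 ∧ G ρ i + 1 ≤ B i)
    (freq_mono fun n => houter _)
  have houter_le := hG.card_div_le_card_div_add hK hnat A B
  refine ⟨_, _, _, _,
    hx.tendsto_freq_residue hK fun ρ => ∀ i, A i ≤ G ρ i ∧ G ρ i + 2 ≤ B i,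
    hx.tendsto_freq_residue hK fun ρ => ∀ i, A i ≤ G ρ i + 1 ∧ G ρ i + 1 ≤ B i,
    fun N => ⟨freq_mono (fun n => hinner _) N, freq_mono (fun n => houter _) N⟩, ?_, ?_⟩ <;> linarith

end Cube

namespace Real

lemma exists_sum_ofDigitsTerm_eq_div {b : ℕ} (a : ℕ → Fin b) (n : ℕ) :
    ∃ m < b ^ n, ∑ i ∈ range n, ofDigitsTerm a i = m / (b : ℝ) ^ n := by
  induction n with
  | zero => exact ⟨0, by simp, by simp⟩
  | succ n ih =>
    obtain ⟨m, hm, hsum⟩ := ih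
    have hb : (b : ℝ) ≠ 0 := by exact_mod_cast (Fin.pos (a 0)).ne'
    refine ⟨b * m + a n, ?_, ?_⟩
    · calc b * m + a n < b * (m + 1) := by have := (a n).isLt; rw [mul_add_one]; omega
        _ ≤ b ^ (n + 1) := by rw [pow_succ']; exact Nat.mul_le_mul_left _ hm
    · rw [sum_range_succ, hsum, ofDigitsTerm]
      push_cast
      field_simp
      ring

lemma ofDigits_mem_Icc_of_sum_eq {b : ℕ} (a : ℕ → Fin b) {n m : ℕ}
    (hm : ∑ i ∈ range n, ofDigitsTerm a i = m / (b : ℝ) ^ n) :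
    m / (b : ℝ) ^ n ≤ ofDigits a ∧ ofDigits a ≤ (m + 1) / (b : ℝ) ^ n := by
  rw [ofDigits_eq_sum_add_ofDigits a n, hm, add_div, one_div]
  have h0 := ofDigits_nonneg fun i => a (i + n)
  have h1 := ofDigits_le_one fun i => a (i + n)
  exact ⟨le_add_of_nonneg_right (by positivity),
    add_le_add le_rfl (mul_le_of_le_one_right (by positivity) h1)⟩

end Real

lemma exists_forall_le_forall_ge_eq_zero {ι M : Type*} [Finite ι] [Zero M] {c : ι → ℕ → ℕ → M}
    (hc : ∀ i j, ∃ R, ∀ r, R ≤ r → c i j r = 0) (D : ℕ) :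
    ∃ K, ∀ i, ∀ j ≤ D, ∀ r, K ≤ r → c i j r = 0 := by
  have := Fintype.ofFinite ι
  choose R hR using hc
  refine ⟨(univ ×ˢ range (D + 1)).sup fun p => R p.1 p.2, fun i j hj r hr => hR i j r ?_⟩
  have hij : (i, j) ∈ univ ×ˢ range (D + 1) := mem_product.2 ⟨mem_univ i, mem_range.2 (by omega)⟩
  exact (le_sup (f := fun p : ι × ℕ => R p.1 p.2) hij).trans hr

section Digital

variable {F : Type} [Field F] {q s : ℕ} (hq : 0 < q) (c : Fin s → ℕ → ℕ → F)
  (ψ : ℕ → Fin q ≃ F) (Λ : Fin s → ℕ → F ≃ Fin q)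

noncomputable def digDigits (x : Zb q) (i : Fin s) (j : ℕ) : Fin q :=
  Λ i (j + 1) (∑ᶠ r : ℕ, c i (j + 1) r * ψ r (zbDigitF q hq x r))

lemma digPoint_eq_ofDigits (x : Zb q) (i : Fin s) :
    digPoint q hq s c ψ Λ x i = Real.ofDigits (digDigits hq c ψ Λ x i) := by
  simp only [digPoint, Real.ofDigits, Real.ofDigitsTerm, digDigits, div_eq_mul_inv]

lemma digDigits_natToZb_val (x : Zb q) {i : Fin s} {j K : ℕ}
    (hc : ∀ r, K ≤ r → c i (j + 1) r = 0) :
    digDigits hq c ψ Λ (natToZb q (x.1 K).val) i j = digDigits hq c ψ Λ x i j := by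
  refine congrArg _ (finsum_congr fun r => ?_)
  rcases lt_or_ge r K with hr | hr
  · rw [zbDigitF_natToZb_val hq x hr]
  · simp [hc r hr]

lemma exists_isResidueCellMap_digPoint (hfin : ∀ i j, ∃ R, ∀ r, R ≤ r → c i j r = 0) (D : ℕ) :
    ∃ K, 1 ≤ K ∧ ∃ G, IsResidueCellMap (digPoint q hq s c ψ Λ) D K G := by
  obtain ⟨K, hK⟩ := exists_forall_le_forall_ge_eq_zero hfin D
  choose G hG using fun (ρ : ZMod (q ^ (K + 1))) i =>
    Real.exists_sum_ofDigitsTerm_eq_div (digDigits hq c ψ Λ (natToZb q ρ.val) i) D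
  refine ⟨K + 1, by omega, G, fun x i => ⟨(hG _ i).1, ?_⟩⟩
  rw [digPoint_eq_ofDigits]
  refine Real.ofDigits_mem_Icc_of_sum_eq _ ((sum_congr rfl fun j hj => ?_).trans (hG _ i).2)
  rw [Real.ofDigitsTerm, Real.ofDigitsTerm,
    digDigits_natToZb_val hq c ψ Λ x fun r hr => hK i (j + 1) (mem_range.1 hj) r (by omega)]

end Digital

theorem stmt_12_general {F : Type} [Field F] [Fintype F] (q : ℕ) (hq : Fintype.card F = q)
    (hq0 : 0 < q) (s : ℕ) (c : Fin s → ℕ → ℕ → F)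
    (hfin : ∀ i j, ∃ R : ℕ, ∀ r, R ≤ r → c i j r = 0)
    (ψ : ℕ → Fin q ≃ F) (Λ : Fin s → ℕ → F ≃ Fin q)
    (hudnat : UDCube q s (fun n => digPoint q hq0 s c ψ Λ (natToZb q n)))
    (sn : ℕ → ↥(Zb q)) (hsn : UDZb q sn) :
    UDCube q s (fun n => digPoint q hq0 s c ψ Λ (sn n)) :=
  UDCube.comp_of_udZb (hq ▸ Fintype.one_lt_card)
    (exists_isResidueCellMap_digPoint hq0 c ψ Λ hfin) hudnat hsn

/-- if the finite-row generating matrices produce (via the digital method with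
index sequence `s_n = n`) a uniformly distributed sequence in `[0,1]^s`, and `(s_n)` is a
uniformly distributed sequence in `Z_q`, then the digital method applied to the `q`-adic
digits of `s_n` produces a uniformly distributed sequence in `[0,1]^s`. -/
theorem stmt_12 {F : Type} [Field F] [Fintype F] (q : ℕ) (hq : Fintype.card F = q)
    (hq0 : 0 < q) (s : ℕ) (hs : 1 ≤ s) (c : Fin s → ℕ → ℕ → F)
    (hfin : ∀ i j, ∃ R : ℕ, ∀ r, R ≤ r → c i j r = 0)
    (ψ : ℕ → Fin q ≃ F) (Λ : Fin s → ℕ → F ≃ Fin q)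
    (hudnat : UDCube q s (fun n => digPoint q hq0 s c ψ Λ (natToZb q n)))
    (sn : ℕ → ↥(Zb q)) (hsn : UDZb q sn) :
    UDCube q s (fun n => digPoint q hq0 s c ψ Λ (sn n)) :=
  stmt_12_general q hq hq0 s c hfin ψ Λ hudnat sn hsn
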